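/- Assume b = A x̄ + z, and let δ' ∈ (0,1), γ > (1+δ')/(1−δ'), and λ > 0 satisfy λ ≥ max{4, (γ+1)/((1−δ')γ − (1+δ'))} · ‖Aᵀz‖_∞. Let s̃ ≥ 1 be an integer with ρ₋(A, s̄+s̃) > 0. If x ∈ ℝⁿ satisfies ‖x_{S̄ᶜ}‖₀ ≤ s̃ and φ_λ(x) ≤ φ_λ(x̄) + 2δ'(1+γ)λ² s̄ / ρ₋(A, s̄+s̃), then max{ (1/(2λ))‖A(x − x̄)‖₂², ‖x − x̄‖₁ } ≤ 4(1+γ)λ s̄ / ρ₋(A, s̄+s̃). -/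

import Mathlib

open scoped BigOperators
open Matrix

noncomputable section

namespace PGH

/-- Euclidean dot product on `Fin n → ℝ`. -/
def dot {n : ℕ} (x y : Fin n → ℝ) : ℝ := ∑ i, x i * y i

/-- Squared Euclidean norm. -/
def sqnorm {n : ℕ} (x : Fin n → ℝ) : ℝ := ∑ i, (x i) ^ 2

/-- Euclidean (ℓ₂) norm. -/
noncomputable def l2 {n : ℕ} (x : Fin n → ℝ) : ℝ := Real.sqrt (sqnorm x)

/-- ℓ₁ norm. -/
def l1 {n : ℕ} (x : Fin n → ℝ) : ℝ := ∑ i, |x i|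

/-- ℓ∞ norm (maximum absolute coordinate). -/
noncomputable def linf {n : ℕ} (x : Fin n → ℝ) : ℝ := ⨆ i, |x i|

/-- Support of a vector. -/
def supp {n : ℕ} (x : Fin n → ℝ) : Finset (Fin n) := Finset.univ.filter (fun i => x i ≠ 0)

/-- Number of nonzero coordinates. -/
def l0 {n : ℕ} (x : Fin n → ℝ) : ℕ := (supp x).card

/-- Number of nonzero coordinates within the index set `S`
(i.e. `‖x_S‖₀` for the restriction of `x` to `S`). -/
def l0on {n : ℕ} (S : Finset (Fin n)) (x : Fin n → ℝ) : ℕ :=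
  (S.filter (fun i => x i ≠ 0)).card

/-- ℓ₁ norm of the restriction of `x` to the index set `S`. -/
def l1on {n : ℕ} (S : Finset (Fin n)) (x : Fin n → ℝ) : ℝ := ∑ i ∈ S, |x i|

/-- Gradient of `f(x) = (1/2)‖Ax - b‖₂²`, namely `Aᵀ(Ax - b)`. -/
def grad {m n : ℕ} (A : Matrix (Fin m) (Fin n) ℝ) (b : Fin m → ℝ) (x : Fin n → ℝ) :
    Fin n → ℝ :=
  Aᵀ.mulVec (A.mulVec x - b)

/-- Least-squares objective `f(x) = (1/2)‖Ax - b‖₂²`. -/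
def fls {m n : ℕ} (A : Matrix (Fin m) (Fin n) ℝ) (b : Fin m → ℝ) (x : Fin n → ℝ) : ℝ :=
  sqnorm (A.mulVec x - b) / 2

/-- ℓ₁-regularized least-squares objective `φ_λ(x) = f(x) + λ‖x‖₁`. -/
def phi {m n : ℕ} (A : Matrix (Fin m) (Fin n) ℝ) (b : Fin m → ℝ) (lam : ℝ)
    (x : Fin n → ℝ) : ℝ :=
  fls A b x + lam * l1 x

/-- Restricted maximal eigenvalue `ρ₊(A, s)`. -/
noncomputable def rhoPlus {m n : ℕ} (A : Matrix (Fin m) (Fin n) ℝ) (s : ℕ) : ℝ :=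
  sSup {r | ∃ x : Fin n → ℝ, x ≠ 0 ∧ l0 x ≤ s ∧ r = sqnorm (A.mulVec x) / sqnorm x}

/-- Restricted minimal eigenvalue `ρ₋(A, s)`. -/
noncomputable def rhoMinus {m n : ℕ} (A : Matrix (Fin m) (Fin n) ℝ) (s : ℕ) : ℝ :=
  sInf {r | ∃ x : Fin n → ℝ, x ≠ 0 ∧ l0 x ≤ s ∧ r = sqnorm (A.mulVec x) / sqnorm x}

/-- `ξ` is a subgradient of the ℓ₁ norm at `x`. -/
def IsSubgrad {n : ℕ} (x ξ : Fin n → ℝ) : Prop :=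
  ∀ i, (x i ≠ 0 → ξ i = Real.sign (x i)) ∧ (x i = 0 → |ξ i| ≤ 1)

/-- Optimality residue `ω_λ(x) = min_{ξ ∈ ∂‖x‖₁} ‖Aᵀ(Ax−b) + λξ‖_∞`. -/
noncomputable def omega {m n : ℕ} (A : Matrix (Fin m) (Fin n) ℝ) (b : Fin m → ℝ)
    (lam : ℝ) (x : Fin n → ℝ) : ℝ :=
  sInf {r | ∃ ξ : Fin n → ℝ, IsSubgrad x ξ ∧
    r = linf (fun i => grad A b x i + lam * ξ i)}

/-- The local model `ψ_{λ,L}(y; x)`. -/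
def psi {m n : ℕ} (A : Matrix (Fin m) (Fin n) ℝ) (b : Fin m → ℝ) (lam L : ℝ)
    (y x : Fin n → ℝ) : ℝ :=
  fls A b y + dot (grad A b y) (x - y) + L / 2 * sqnorm (x - y) + lam * l1 x

/-- The noise-domination condition
`λ ≥ max{4, (γ+1)/((1−δ')γ−(1+δ'))} ⬝ ‖Aᵀz‖_∞`. -/
def noiseCond {m n : ℕ} (A : Matrix (Fin m) (Fin n) ℝ) (z : Fin m → ℝ)
    (dp gam lam : ℝ) : Prop :=
  lam ≥ max 4 ((gam + 1) / ((1 - dp) * gam - (1 + dp))) * linf (Aᵀ.mulVec z)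

/-! With `h = x - x̄`, `S = supp x̄`, `κ = ‖Aᵀz‖_∞` and `E` the allowed excess, expanding
`φ_λ(x) ≤ φ_λ(x̄) + E` gives the basic inequality
`‖Ah‖²/2 + (λ - κ)‖h_{Sᶜ}‖₁ ≤ (λ + κ)‖h_S‖₁ + E`,
and since `h` is `(s̄ + s̃)`-sparse, Cauchy–Schwarz and the restricted eigenvalue give
`ρ₋ ‖h_S‖₁² ≤ s̄ ‖Ah‖²`. If `E ≤ δ'λ‖h‖₁`, the excess is absorbed and `h` lies in the cone
`‖h_{Sᶜ}‖₁ ≤ γ‖h_S‖₁`, which yields both bounds; otherwise `‖h‖₁ < E / (δ'λ)` directly, and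
`‖Ah‖²` is bounded by AM-GM. -/

lemma sqnorm_nonneg {n : ℕ} (x : Fin n → ℝ) : 0 ≤ sqnorm x :=
  Finset.sum_nonneg fun i _ => sq_nonneg (x i)

lemma sqnorm_pos {n : ℕ} {x : Fin n → ℝ} (hx : x ≠ 0) : 0 < sqnorm x := by
  obtain ⟨i, hi⟩ := Function.ne_iff.mp hx
  exact (pow_pos (abs_pos.mpr hi) 2).trans_le <| (sq_abs (x i)).symm ▸
    Finset.single_le_sum (fun j _ => sq_nonneg (x j)) (Finset.mem_univ i)

lemma sqnorm_sub {n : ℕ} (u v : Fin n → ℝ) :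
    sqnorm (u - v) = sqnorm u - 2 * dot u v + sqnorm v := by
  simp only [sqnorm, dot, Pi.sub_apply, Finset.mul_sum]
  rw [← Finset.sum_sub_distrib, ← Finset.sum_add_distrib]
  exact Finset.sum_congr rfl fun i _ => by ring

lemma sqnorm_neg {n : ℕ} (v : Fin n → ℝ) : sqnorm (-v) = sqnorm v := by
  simp [sqnorm]

lemma dot_mulVec {m n : ℕ} (A : Matrix (Fin m) (Fin n) ℝ) (u : Fin n → ℝ) (z : Fin m → ℝ) :
    dot (A *ᵥ u) z = dot u (Aᵀ *ᵥ z) := by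
  change (A *ᵥ u) ⬝ᵥ z = u ⬝ᵥ (Aᵀ *ᵥ z)
  rw [dotProduct_comm, dotProduct_mulVec, mulVec_transpose, dotProduct_comm]

lemma abs_le_linf {n : ℕ} (v : Fin n → ℝ) (i : Fin n) : |v i| ≤ linf v :=
  le_ciSup (Set.finite_range fun j => |v j|).bddAbove i

lemma linf_nonneg {n : ℕ} (v : Fin n → ℝ) : 0 ≤ linf v :=
  Real.iSup_nonneg fun i => abs_nonneg (v i)

lemma abs_dot_le_linf_mul_l1 {n : ℕ} (u v : Fin n → ℝ) : |dot u v| ≤ linf v * l1 u :=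
  calc |dot u v| ≤ ∑ i, |u i * v i| := Finset.abs_sum_le_sum_abs _ _
    _ ≤ ∑ i, linf v * |u i| := Finset.sum_le_sum fun i _ => by
        rw [abs_mul, mul_comm]
        exact mul_le_mul_of_nonneg_right (abs_le_linf v i) (abs_nonneg _)
    _ = linf v * l1 u := by rw [l1, Finset.mul_sum]

lemma l1on_nonneg {n : ℕ} (S : Finset (Fin n)) (h : Fin n → ℝ) : 0 ≤ l1on S h :=
  Finset.sum_nonneg fun i _ => abs_nonneg (h i)

lemma l1_eq_l1on_add_l1on_compl {n : ℕ} (S : Finset (Fin n)) (h : Fin n → ℝ) :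
    l1 h = l1on S h + l1on Sᶜ h :=
  (Finset.sum_add_sum_compl S _).symm

lemma l1on_sq_le_card_mul_sqnorm {n : ℕ} (S : Finset (Fin n)) (h : Fin n → ℝ) :
    l1on S h ^ 2 ≤ S.card * sqnorm h :=
  calc l1on S h ^ 2 ≤ S.card * ∑ i ∈ S, |h i| ^ 2 := sq_sum_le_card_mul_sum_sq
    _ ≤ S.card * sqnorm h := by
        simp only [sq_abs]
        gcongr
        exact Finset.sum_le_sum_of_subset_of_nonneg (Finset.subset_univ S)
          fun i _ _ => sq_nonneg (h i)

lemma mem_supp {n : ℕ} {x : Fin n → ℝ} {i : Fin n} : i ∈ supp x ↔ x i ≠ 0 := by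
  simp [supp]

lemma l0_sub_le {n : ℕ} (x y : Fin n → ℝ) :
    l0 (x - y) ≤ (supp y).card + l0on (supp y)ᶜ x := by
  have hsub : supp (x - y) ⊆ supp y ∪ (supp y)ᶜ.filter (fun i => x i ≠ 0) := by
    intro i hi
    by_cases hiy : i ∈ supp y
    · exact Finset.mem_union_left _ hiy
    · have hyi : y i = 0 := by simpa [mem_supp] using hiy
      refine Finset.mem_union_right _ (Finset.mem_filter.mpr ⟨Finset.mem_compl.mpr hiy, ?_⟩)
      simpa [mem_supp, hyi] using hi
  exact (Finset.card_le_card hsub).trans (Finset.card_union_le _ _)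

lemma l1_sub_l1_le {n : ℕ} (x y : Fin n → ℝ) :
    l1 y - l1 x ≤ l1on (supp y) (x - y) - l1on (supp y)ᶜ (x - y) := by
  have hy : ∀ i ∈ (supp y)ᶜ, y i = 0 := fun i hi => by
    simpa [mem_supp] using Finset.mem_compl.mp hi
  have hout_y : l1on (supp y)ᶜ y = 0 :=
    Finset.sum_eq_zero fun i hi => by rw [hy i hi, abs_zero]
  have hout_x : l1on (supp y)ᶜ x = l1on (supp y)ᶜ (x - y) :=
    Finset.sum_congr rfl fun i hi => by rw [Pi.sub_apply, hy i hi, sub_zero]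
  have hin : l1on (supp y) y ≤ l1on (supp y) x + l1on (supp y) (x - y) := by
    rw [l1on, l1on, l1on, ← Finset.sum_add_distrib]
    exact Finset.sum_le_sum fun i _ => by simpa using abs_sub (x i) (x i - y i)
  rw [l1_eq_l1on_add_l1on_compl (supp y) y, l1_eq_l1on_add_l1on_compl (supp y) x, hout_y, hout_x]
  linarith

lemma rhoMinus_nonneg {m n : ℕ} (A : Matrix (Fin m) (Fin n) ℝ) (s : ℕ) : 0 ≤ rhoMinus A s :=
  Real.sInf_nonneg fun _ ⟨_, _, _, hr⟩ => hr ▸ div_nonneg (sqnorm_nonneg _) (sqnorm_nonneg _)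

lemma rhoMinus_mul_sqnorm_le {m n : ℕ} (A : Matrix (Fin m) (Fin n) ℝ) {s : ℕ}
    {h : Fin n → ℝ} (hs : l0 h ≤ s) : rhoMinus A s * sqnorm h ≤ sqnorm (A *ᵥ h) := by
  rcases eq_or_ne h 0 with rfl | hh
  · simp [sqnorm]
  · have hbdd : BddBelow {r | ∃ x : Fin n → ℝ, x ≠ 0 ∧ l0 x ≤ s ∧
        r = sqnorm (A *ᵥ x) / sqnorm x} :=
      ⟨0, fun _ ⟨_, _, _, hr⟩ => hr ▸ div_nonneg (sqnorm_nonneg _) (sqnorm_nonneg _)⟩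
    rw [← le_div_iff₀ (sqnorm_pos hh)]
    exact csInf_le hbdd ⟨h, hh, hs, rfl⟩

lemma rhoMinus_mul_l1on_sq_le {m n : ℕ} (A : Matrix (Fin m) (Fin n) ℝ) (S : Finset (Fin n))
    {s : ℕ} {h : Fin n → ℝ} (hs : l0 h ≤ s) :
    rhoMinus A s * l1on S h ^ 2 ≤ S.card * sqnorm (A *ᵥ h) :=
  calc rhoMinus A s * l1on S h ^ 2 ≤ rhoMinus A s * (S.card * sqnorm h) :=
        mul_le_mul_of_nonneg_left (l1on_sq_le_card_mul_sqnorm S h) (rhoMinus_nonneg A s)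
    _ = S.card * (rhoMinus A s * sqnorm h) := by ring
    _ ≤ S.card * sqnorm (A *ᵥ h) :=
        mul_le_mul_of_nonneg_left (rhoMinus_mul_sqnorm_le A hs) (Nat.cast_nonneg _)

lemma phi_sub_phi {m n : ℕ} {A : Matrix (Fin m) (Fin n) ℝ} {b z : Fin m → ℝ} {y : Fin n → ℝ}
    (hb : b = A *ᵥ y + z) (lam : ℝ) (x : Fin n → ℝ) :
    phi A b lam x - phi A b lam y =
      sqnorm (A *ᵥ (x - y)) / 2 - dot (x - y) (Aᵀ *ᵥ z) + lam * (l1 x - l1 y) := by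
  have hx : A *ᵥ x - b = A *ᵥ (x - y) - z := by rw [hb, mulVec_sub]; abel
  have hy : A *ᵥ y - b = -z := by rw [hb]; abel
  rw [phi, phi, fls, fls, hx, hy, sqnorm_sub, sqnorm_neg, dot_mulVec]
  ring

lemma basic_inequality {m n : ℕ} {A : Matrix (Fin m) (Fin n) ℝ} {b z : Fin m → ℝ}
    {y x : Fin n → ℝ} {lam E : ℝ} (hb : b = A *ᵥ y + z) (hlam : 0 ≤ lam)
    (hobj : phi A b lam x ≤ phi A b lam y + E) :
    sqnorm (A *ᵥ (x - y)) / 2 + (lam - linf (Aᵀ *ᵥ z)) * l1on (supp y)ᶜ (x - y) ≤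
      (lam + linf (Aᵀ *ᵥ z)) * l1on (supp y) (x - y) + E := by
  have hnoise : dot (x - y) (Aᵀ *ᵥ z) ≤
      linf (Aᵀ *ᵥ z) * (l1on (supp y) (x - y) + l1on (supp y)ᶜ (x - y)) := by
    rw [← l1_eq_l1on_add_l1on_compl]
    exact (le_abs_self _).trans (abs_dot_le_linf_mul_l1 _ _)
  have hl1 := mul_le_mul_of_nonneg_left (l1_sub_l1_le x y) hlam
  linarith [phi_sub_phi hb lam x]

lemma two_lt_one_sub_mul_one_add {dp gam : ℝ} (hdp1 : dp < 1)
    (hgam : gam > (1 + dp) / (1 - dp)) : 2 < (1 - dp) * (1 + gam) := by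
  rw [gt_iff_lt, div_lt_iff₀ (by linarith)] at hgam
  linarith

lemma noiseCond.four_mul_le {m n : ℕ} {A : Matrix (Fin m) (Fin n) ℝ} {z : Fin m → ℝ}
    {dp gam lam : ℝ} (h : noiseCond A z dp gam lam) : 4 * linf (Aᵀ *ᵥ z) ≤ lam :=
  (mul_le_mul_of_nonneg_right (le_max_left _ _) (linf_nonneg _)).trans h

lemma noiseCond.mul_one_add_le {m n : ℕ} {A : Matrix (Fin m) (Fin n) ℝ} {z : Fin m → ℝ}
    {dp gam lam : ℝ} (h : noiseCond A z dp gam lam) (hG : 2 < (1 - dp) * (1 + gam)) :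
    linf (Aᵀ *ᵥ z) * (1 + gam) ≤ lam * ((1 - dp) * (1 + gam) - 2) := by
  have hD : 0 < (1 - dp) * gam - (1 + dp) := by linarith
  have h' := (mul_le_mul_of_nonneg_right (le_max_right _ _) (linf_nonneg _)).trans h
  rw [div_mul_eq_mul_div, div_le_iff₀ hD] at h'
  linarith

section Scalar

variable {T a c ρ s : ℝ}

lemma mul_le_of_sq_le_of_le_two_mul_add {α β : ℝ} (hT : 0 ≤ T) (hρ : 0 < ρ) (hs : 0 ≤ s)
    (hCS : ρ * a ^ 2 ≤ s * T) (hbase : T ≤ 2 * α * a + β) :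
    ρ * T ≤ 4 * α ^ 2 * s + 2 * β * ρ := by
  -- Multiplied by `T`, this is `ρ(T - 2αa)² ≥ 0` plus `α²` times `hCS`.
  have hamgm : 2 * α * ρ * a ≤ ρ * T / 2 + 2 * α ^ 2 * s := by
    rcases hT.eq_or_lt with rfl | hT
    · have ha : a = 0 := pow_eq_zero_iff two_ne_zero |>.mp (by nlinarith [sq_nonneg a])
      subst ha
      nlinarith [mul_nonneg (sq_nonneg α) hs]
    · nlinarith [mul_nonneg hρ.le (sq_nonneg (T - 2 * α * a)),
        mul_le_mul_of_nonneg_left hCS (sq_nonneg α)]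
  nlinarith

lemma mul_le_of_sq_le_of_le_two_mul {K : ℝ} (ha : 0 ≤ a) (hs : 0 ≤ s) (hK : 0 ≤ K)
    (hCS : ρ * a ^ 2 ≤ s * T) (hbase : T ≤ 2 * K * a) : ρ * a ≤ 2 * K * s := by
  rcases ha.eq_or_lt with rfl | ha
  · simpa using mul_nonneg (mul_nonneg zero_le_two hK) hs
  · nlinarith

lemma bounds_of_cone {lam gam K D : ℝ} (hT : 0 ≤ T) (ha : 0 ≤ a) (hc : 0 ≤ c) (hρ : 0 < ρ)
    (hs : 0 ≤ s) (hCS : ρ * a ^ 2 ≤ s * T) (hD : 0 < D) (hK : 0 ≤ K) (hKD : K ≤ gam * D)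
    (hK2 : K ≤ 2 * lam) (hgam : 1 ≤ gam) (hbase : T / 2 + D * c ≤ K * a) :
    T * ρ ≤ 2 * lam * (4 * (1 + gam) * lam * s) ∧ (a + c) * ρ ≤ 4 * (1 + gam) * lam * s := by
  have hTa : T ≤ 2 * K * a := by nlinarith [mul_nonneg hD.le hc]
  have hca : c ≤ gam * a :=
    le_of_mul_le_mul_left (by nlinarith [mul_le_mul_of_nonneg_right hKD ha]) hD
  have hρT := mul_le_of_sq_le_of_le_two_mul_add (β := 0) hT hρ hs hCS (by simpa using hTa)
  have hρa := mul_le_of_sq_le_of_le_two_mul ha hs hK hCS hTa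
  constructor
  · nlinarith [mul_le_mul_of_nonneg_right (pow_le_pow_left₀ hK hK2 2) hs,
      mul_nonneg (sub_nonneg.mpr hgam) (mul_nonneg (sq_nonneg lam) hs)]
  · nlinarith [mul_le_mul_of_nonneg_left hca hρ.le, mul_le_mul_of_nonneg_right hK2 hs]

lemma bounds_of_slack {lam kap dp gam E : ℝ} (hT : 0 ≤ T) (hρ : 0 < ρ) (hs : 0 ≤ s)
    (hCS : ρ * a ^ 2 ≤ s * T) (hlam : 0 < lam) (hdp : 0 < dp) (hkap : 0 ≤ kap)
    (hk4 : 4 * kap ≤ lam) (hgam : 1 ≤ gam) (hG : 2 < (1 - dp) * (1 + gam))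
    (hE : E * ρ = 2 * dp * (1 + gam) * lam ^ 2 * s) (hslack : dp * lam * (a + c) < E)
    (hbase : T / 2 ≤ (lam + kap) * a + E) :
    T * ρ ≤ 2 * lam * (4 * (1 + gam) * lam * s) ∧ (a + c) * ρ ≤ 4 * (1 + gam) * lam * s := by
  have hρT := mul_le_of_sq_le_of_le_two_mul_add (α := lam + kap) (β := 2 * E) hT hρ hs hCS
    (by linarith)
  have hlk : (lam + kap) ^ 2 ≤ (5 / 4 * lam) ^ 2 := pow_le_pow_left₀ (by linarith) (by linarith) 2
  constructor
  · nlinarith [mul_le_mul_of_nonneg_right hlk hs,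
      mul_nonneg (by linarith : (0:ℝ) ≤ 8 * (1 - dp) * (1 + gam) - 25 / 4)
        (mul_nonneg (sq_nonneg lam) hs)]
  · have h : dp * lam * ((a + c) * ρ) < dp * lam * (2 * (1 + gam) * lam * s) := by
      linarith [mul_lt_mul_of_pos_right hslack hρ]
    have hG0 : 0 ≤ (1 + gam) * lam * s := by
      have : 0 < 1 + gam := by linarith
      positivity
    linarith [lt_of_mul_lt_mul_left h (mul_pos hdp hlam).le]

lemma error_bounds_of_basic_inequality {lam kap dp gam E : ℝ} (hT : 0 ≤ T) (ha : 0 ≤ a)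
    (hc : 0 ≤ c) (hρ : 0 < ρ) (hs : 0 ≤ s) (hlam : 0 < lam) (hkap : 0 ≤ kap)
    (hk4 : 4 * kap ≤ lam) (hkG : kap * (1 + gam) ≤ lam * ((1 - dp) * (1 + gam) - 2))
    (hdp0 : 0 < dp) (hdp1 : dp < 1) (hG : 2 < (1 - dp) * (1 + gam))
    (hE : E * ρ = 2 * dp * (1 + gam) * lam ^ 2 * s)
    (hbase : T / 2 + (lam - kap) * c ≤ (lam + kap) * a + E) (hCS : ρ * a ^ 2 ≤ s * T) :
    T * ρ ≤ 2 * lam * (4 * (1 + gam) * lam * s) ∧ (a + c) * ρ ≤ 4 * (1 + gam) * lam * s := by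
  have hgam : 1 ≤ gam := by nlinarith
  rcases le_or_gt E (dp * lam * (a + c)) with habsorb | hslack
  · refine bounds_of_cone (K := lam + kap + dp * lam) (D := lam - kap - dp * lam) hT ha hc hρ hs
      hCS ?_ (by positivity) (by linarith) ?_ hgam (by linarith)
    · nlinarith
    · nlinarith
  · exact bounds_of_slack hT hρ hs hCS hlam hdp0 hkap hk4 hgam hG hE hslack
      (by nlinarith [mul_nonneg (by linarith : 0 ≤ lam - kap) hc])

end Scalar

theorem stmt4_general {m n : ℕ} (A : Matrix (Fin m) (Fin n) ℝ) (b : Fin m → ℝ)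
    (xbar : Fin n → ℝ) (z : Fin m → ℝ) (hb : b = A.mulVec xbar + z)
    (dp gam lam : ℝ) (hdp0 : 0 < dp) (hdp1 : dp < 1)
    (hgam : gam > (1 + dp) / (1 - dp))
    (hlam : 0 < lam) (hnoise : noiseCond A z dp gam lam)
    (st : ℕ)
    (hrho : 0 < rhoMinus A ((supp xbar).card + st))
    (x : Fin n → ℝ) (hxsp : l0on (supp xbar)ᶜ x ≤ st)
    (hobj : phi A b lam x ≤ phi A b lam xbar +
      2 * dp * (1 + gam) * lam ^ 2 * ((supp xbar).card : ℝ) /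
        rhoMinus A ((supp xbar).card + st)) :
    max (1 / (2 * lam) * sqnorm (A.mulVec (x - xbar))) (l1 (x - xbar)) ≤
      4 * (1 + gam) * lam * ((supp xbar).card : ℝ) /
        rhoMinus A ((supp xbar).card + st) := by
  have hG := two_lt_one_sub_mul_one_add hdp1 hgam
  have hsparse : l0 (x - xbar) ≤ (supp xbar).card + st :=
    (l0_sub_le x xbar).trans (Nat.add_le_add_left hxsp _)
  obtain ⟨hT, hl1⟩ := error_bounds_of_basic_inequality (sqnorm_nonneg _) (l1on_nonneg _ _)
    (l1on_nonneg _ _) hrho (Nat.cast_nonneg _) hlam (linf_nonneg _) hnoise.four_mul_le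
    (hnoise.mul_one_add_le hG) hdp0 hdp1 hG (div_mul_cancel₀ _ hrho.ne')
    (basic_inequality hb hlam.le hobj) (rhoMinus_mul_l1on_sq_le A (supp xbar) hsparse)
  rw [max_le_iff, le_div_iff₀ hrho, le_div_iff₀ hrho, l1_eq_l1on_add_l1on_compl (supp xbar)]
  refine ⟨?_, hl1⟩
  rw [one_div, inv_mul_eq_div, div_mul_eq_mul_div, div_le_iff₀ (by positivity)]
  linarith

theorem stmt4 {m n : ℕ} (A : Matrix (Fin m) (Fin n) ℝ) (b : Fin m → ℝ)
    (xbar : Fin n → ℝ) (z : Fin m → ℝ) (hb : b = A.mulVec xbar + z)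
    (dp gam lam : ℝ) (hdp0 : 0 < dp) (hdp1 : dp < 1)
    (hgam : gam > (1 + dp) / (1 - dp))
    (hlam : 0 < lam) (hnoise : noiseCond A z dp gam lam)
    (st : ℕ) (hst : 1 ≤ st)
    (hrho : 0 < rhoMinus A ((supp xbar).card + st))
    (x : Fin n → ℝ) (hxsp : l0on (supp xbar)ᶜ x ≤ st)
    (hobj : phi A b lam x ≤ phi A b lam xbar +
      2 * dp * (1 + gam) * lam ^ 2 * ((supp xbar).card : ℝ) /
        rhoMinus A ((supp xbar).card + st)) :
    max (1 / (2 * lam) * sqnorm (A.mulVec (x - xbar))) (l1 (x - xbar)) ≤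
      4 * (1 + gam) * lam * ((supp xbar).card : ℝ) /
        rhoMinus A ((supp xbar).card + st) :=
  stmt4_general A b xbar z hb dp gam lam hdp0 hdp1 hgam hlam hnoise st hrho x hxsp hobj

end PGH
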